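/- arXiv:2402.08438 — 10 statements merged into one kernel-verified Lean document; each statement's English description precedes it below -/
import Mathlib

section
/- For all positive integers m, n, l and all third-order real tensors A, B : Fin l → Matrix (Fin m) (Fin n) ℝ, the Frobenius inner product of their block circulant matrices equals l times the entrywise inner product of the tensors: trace((bcirc A)ᵀ · bcirc B) = l · Σ_{k ∈ Fin l} trace((A⁽ᵏ⁾)ᵀ · B⁽ᵏ⁾). -/
open Matrix

/-- The block circulant matrix of a third-order tensor given by its frontal slices. -/
def bcirc {m n l : ℕ} (A : Fin l → Matrix (Fin m) (Fin n) ℝ) :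
    Matrix (Fin l × Fin m) (Fin l × Fin n) ℝ :=
  Matrix.of fun p q => A (p.1 - q.1) p.2 q.2

/- Each slice `A⁽ᵏ⁾` occurs exactly once in every block column of `bcirc A`, namely in block row
`q + k`; so summing the entrywise products of `bcirc A` and `bcirc B` over the block rows of a block
column yields `⟨A, B⟩`, and there are `l` block columns. -/

theorem Matrix.trace_transpose_mul_eq_sum_mul {m n R : Type*} [Fintype m] [Fintype n]
    [NonUnitalNonAssocSemiring R] (M N : Matrix m n R) :
    trace (Mᵀ * N) = ∑ i, ∑ j, M i j * N i j := by
  rw [trace, Finset.sum_comm]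
  rfl

theorem Fintype.sum_sum_sub_eq_card_nsmul {G M : Type*} [AddGroup G] [Fintype G]
    [AddCommMonoid M] (f : G → M) :
    ∑ p, ∑ q, f (p - q) = Fintype.card G • ∑ k, f k := by
  rw [Finset.sum_comm, ← Finset.card_univ, ← Finset.sum_const]
  exact Finset.sum_congr rfl fun q _ => (Equiv.subRight q).sum_comp f

theorem trace_transpose_bcirc_mul_bcirc {m n l : ℕ} [NeZero l]
    (A B : Fin l → Matrix (Fin m) (Fin n) ℝ) :
    trace ((bcirc A)ᵀ * bcirc B) = l • ∑ k, trace ((A k)ᵀ * B k) := by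
  simp only [trace_transpose_mul_eq_sum_mul, Fintype.sum_prod_type, bcirc, of_apply]
  calc ∑ p : Fin l, ∑ i : Fin m, ∑ q : Fin l, ∑ j : Fin n, A (p - q) i j * B (p - q) i j
      = ∑ p : Fin l, ∑ q : Fin l, ∑ i : Fin m, ∑ j : Fin n, A (p - q) i j * B (p - q) i j :=
        Finset.sum_congr rfl fun p _ => Finset.sum_comm
    _ = l • ∑ k, ∑ i, ∑ j, A k i j * B k i j := by
        rw [Fintype.sum_sum_sub_eq_card_nsmul (fun k => ∑ i, ∑ j, A k i j * B k i j),
          Fintype.card_fin]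

theorem bcirc_frobenius_inner_eq_card_mul_tensor_inner_general
    (m n l : ℕ) (hl : 0 < l)
    (A B : Fin l → Matrix (Fin m) (Fin n) ℝ) :
    Matrix.trace ((bcirc A)ᵀ * bcirc B) =
      (l : ℝ) * ∑ k : Fin l, Matrix.trace ((A k)ᵀ * B k) := by
  have := NeZero.of_pos hl
  rw [trace_transpose_bcirc_mul_bcirc, nsmul_eq_mul]

/-- For all positive integers `m, n, l` and third-order tensors `A, B`,
the Frobenius inner product of their block circulant matrices equals `l` times the
entrywise inner product of the tensors. -/
theorem bcirc_frobenius_inner_eq_card_mul_tensor_inner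
    (m n l : ℕ) (hm : 0 < m) (hn : 0 < n) (hl : 0 < l)
    (A B : Fin l → Matrix (Fin m) (Fin n) ℝ) :
    Matrix.trace ((bcirc A)ᵀ * bcirc B) =
      (l : ℝ) * ∑ k : Fin l, Matrix.trace ((A k)ᵀ * B k) :=
  bcirc_frobenius_inner_eq_card_mul_tensor_inner_general m n l hl A B
end

section
/- Every third-order real tensor A : Fin l → Matrix (Fin m) (Fin n) ℝ can be block-diagonalized by the discrete Fourier transform: (F_l ⊗ I_m)^H · bcirc(A) · (F_l ⊗ I_n) is block diagonal, i.e. its ((p,i),(q,j)) entry is 0 whenever p ≠ q, and equals (D_p(A)) i j whenever p = q, where D_k(A) := Σ_{s=0}^{l−1} e^{−2πi·sk/l} · A⁽ˢ⁾ ∈ ℂ^{m×n}. Moreover D_0(A) has real entries, and D_k(A) = conj(D_{l−k}(A)) for every k ∈ Fin l (indices mod l). -/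
open Matrix

/-- The normalized `l × l` discrete Fourier transform matrix,
`(F_l)_{jk} = l^{-1/2} · exp(2πi·jk/l)`. -/
noncomputable def dftMatrix (l : ℕ) : Matrix (Fin l) (Fin l) ℂ :=
  Matrix.of fun j k =>
    ((Real.sqrt l : ℝ) : ℂ)⁻¹ *
      Complex.exp (2 * (Real.pi : ℂ) * Complex.I * ((j : ℕ) * (k : ℕ) : ℕ) / (l : ℂ))

/-- The `k`-th diagonal block `D_k(A) = Σ_{s=0}^{l-1} exp(-2πi·sk/l) · A⁽ˢ⁾`. -/
noncomputable def dftSlice {m n l : ℕ} (A : Fin l → Matrix (Fin m) (Fin n) ℝ) (k : Fin l) :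
    Matrix (Fin m) (Fin n) ℂ :=
  ∑ s : Fin l,
    Complex.exp (-(2 * (Real.pi : ℂ) * Complex.I * ((s : ℕ) * (k : ℕ) : ℕ) / (l : ℂ))) •
      (A s).map (Complex.ofReal)

/-!
Let `ψ x = exp(2πi x / l)` be the standard additive character of `ZMod l`, so that the DFT
matrix is `l^{-1/2} ψ(jk)` and `D_k(A) = Σ_s ψ(-sk) A⁽ˢ⁾`. The `(p, q)` block of the conjugated
block circulant is `l⁻¹ Σ_{a,c} ψ(-ap) A⁽ᵃ⁻ᶜ⁾ ψ(cq)`; substituting `a = c + s` factors it as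
`l⁻¹ (Σ_s ψ(-sp) A⁽ˢ⁾) (Σ_c ψ(c(q - p)))`, and since `ψ` is primitive the last sum is `l` if
`p = q` and `0` otherwise. The reality of `D_0(A)` and the symmetry `D_k = conj D_{-k}` follow
from `ψ 0 = 1` and `conj (ψ x) = ψ (-x)`.
-/

open Finset

theorem AddChar.sum_sum_mul_sub_mul_eq_ite {R R' : Type*} [CommRing R] [Fintype R] [DecidableEq R]
    [CommRing R'] [IsDomain R'] {ψ : AddChar R R'} (hψ : ψ.IsPrimitive) (f : R → R') (p q : R) :
    ∑ c, ∑ a, ψ (-(a * p)) * f (a - c) * ψ (c * q) =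
      if p = q then Fintype.card R * ∑ s, ψ (-(s * p)) * f s else 0 := by
  have hshift (c s : R) : ψ (-((c + s) * p)) * ψ (c * q) = ψ (-(s * p)) * ψ (c * (q - p)) := by
    rw [← map_add_eq_mul, ← map_add_eq_mul]
    ring_nf
  calc ∑ c, ∑ a, ψ (-(a * p)) * f (a - c) * ψ (c * q)
      = ∑ c, ∑ s, ψ (-(s * p)) * f s * ψ (c * (q - p)) := by
        refine sum_congr rfl fun c _ => ?_
        rw [← Equiv.sum_comp (Equiv.addLeft c)]
        refine sum_congr rfl fun s _ => ?_
        simp only [Equiv.coe_addLeft, add_sub_cancel_left]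
        rw [mul_right_comm, hshift, mul_right_comm]
    _ = (∑ s, ψ (-(s * p)) * f s) * ∑ c, ψ (c * (q - p)) := by
        rw [sum_comm, sum_mul_sum]
    _ = _ := by
        simp only [AddChar.sum_mulShift _ hψ, sub_eq_zero, eq_comm (a := q)]
        split_ifs <;> simp [mul_comm]

theorem Matrix.conjTranspose_kronecker_one_mul_mul_kronecker_one_apply {ι ι' κ κ' m n α : Type*}
    [Fintype ι] [Fintype ι'] [Fintype m] [Fintype n] [DecidableEq m] [DecidableEq n]
    [Semiring α] [StarRing α]
    (F : Matrix ι κ α) (M : Matrix (ι × m) (ι' × n) α) (G : Matrix ι' κ' α)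
    (p : κ) (i : m) (q : κ') (j : n) :
    ((kroneckerMap (· * ·) F (1 : Matrix m m α))ᴴ * M * kroneckerMap (· * ·) G (1 : Matrix n n α))
      (p, i) (q, j) = ∑ c, ∑ a, star (F a p) * M (a, i) (c, j) * G c q := by
  simp [mul_apply, Fintype.sum_prod_type, kroneckerMap_apply, one_apply, sum_mul, apply_ite star,
    ite_mul]

theorem ZMod.finEquiv_apply (l : ℕ) [NeZero l] (a : Fin l) : ZMod.finEquiv l a = (a : ℕ) := by
  obtain ⟨n, rfl⟩ : ∃ n, l = n + 1 := Nat.exists_eq_succ_of_ne_zero (NeZero.ne l)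
  exact (ZMod.natCast_zmod_val (n := n + 1) a).symm

theorem ZMod.conj_stdAddChar (l : ℕ) [NeZero l] (x : ZMod l) :
    starRingEnd ℂ (ZMod.stdAddChar x) = ZMod.stdAddChar (-x) := by
  rw [AddChar.starComp_apply (by simp [ZMod.ringChar_zmod_n, NeZero.pos]), AddChar.inv_apply]

theorem ZMod.stdAddChar_natCast (l : ℕ) [NeZero l] (t : ℕ) :
    ZMod.stdAddChar (t : ZMod l) = Complex.exp (2 * Real.pi * Complex.I * t / l) := by
  simpa using ZMod.stdAddChar_coe (N := l) t

theorem dftMatrix_apply (l : ℕ) [NeZero l] (j k : Fin l) :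
    dftMatrix l j k =
      ((Real.sqrt l : ℝ) : ℂ)⁻¹ * ZMod.stdAddChar (ZMod.finEquiv l j * ZMod.finEquiv l k) := by
  rw [ZMod.finEquiv_apply, ZMod.finEquiv_apply, ← Nat.cast_mul, ZMod.stdAddChar_natCast]
  rfl

theorem dftSlice_apply {m n l : ℕ} [NeZero l] (A : Fin l → Matrix (Fin m) (Fin n) ℝ) (k : Fin l)
    (i : Fin m) (j : Fin n) :
    dftSlice A k i j =
      ∑ s, ZMod.stdAddChar (-(ZMod.finEquiv l s * ZMod.finEquiv l k)) * (A s i j : ℂ) := by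
  simp only [ZMod.finEquiv_apply, ← Nat.cast_mul, AddChar.map_neg_eq_inv, ZMod.stdAddChar_natCast,
    ← Complex.exp_neg]
  simp [dftSlice, Matrix.sum_apply]

theorem dft_conjTranspose_mul_bcirc_mul_dft_apply {m n l : ℕ} [NeZero l]
    (A : Fin l → Matrix (Fin m) (Fin n) ℝ) (p q : Fin l) (i : Fin m) (j : Fin n) :
    ((Matrix.kroneckerMap (· * ·) (dftMatrix l) (1 : Matrix (Fin m) (Fin m) ℂ))ᴴ *
        (bcirc A).map (Complex.ofReal) *
        Matrix.kroneckerMap (· * ·) (dftMatrix l) (1 : Matrix (Fin n) (Fin n) ℂ)) (p, i) (q, j) =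
      if p = q then dftSlice A p i j else 0 := by
  set e := ZMod.finEquiv l
  set ψ : AddChar (ZMod l) ℂ := ZMod.stdAddChar
  set f : ZMod l → ℂ := fun x => A (e.symm x) i j
  have hl : ((Real.sqrt l : ℝ) : ℂ)⁻¹ * ((Real.sqrt l : ℝ) : ℂ)⁻¹ * l = 1 := by
    rw [← mul_inv, ← Complex.ofReal_mul, Real.mul_self_sqrt l.cast_nonneg]
    exact inv_mul_cancel₀ (by exact_mod_cast NeZero.ne l)
  have hterm (c a : Fin l) :
      star (dftMatrix l a p) * (bcirc A).map Complex.ofReal (a, i) (c, j) * dftMatrix l c q =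
        ((Real.sqrt l : ℝ) : ℂ)⁻¹ * ((Real.sqrt l : ℝ) : ℂ)⁻¹ *
          (ψ (-(e a * e p)) * f (e a - e c) * ψ (e c * e q)) := by
    simp only [dftMatrix_apply, star_mul', Complex.star_def, map_inv₀, Complex.conj_ofReal,
      ZMod.conj_stdAddChar, Matrix.map_apply, bcirc, Matrix.of_apply, f, ← map_sub,
      RingEquiv.symm_apply_apply]
    ring
  rw [Matrix.conjTranspose_kronecker_one_mul_mul_kronecker_one_apply]
  simp only [hterm, ← mul_sum]
  have hsum : ∑ c : Fin l, ∑ a : Fin l, ψ (-(e a * e p)) * f (e a - e c) * ψ (e c * e q) =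
      ∑ c, ∑ a, ψ (-(a * e p)) * f (a - c) * ψ (c * e q) :=
    Fintype.sum_equiv e.toEquiv _ _ fun c => Fintype.sum_equiv e.toEquiv _ _ fun a => rfl
  have hslice : dftSlice A p i j = ∑ s, ψ (-(s * e p)) * f s := by
    rw [dftSlice_apply]
    exact Fintype.sum_equiv e.toEquiv _ _ fun s => by simp [f, e, ψ]
  rw [hsum, AddChar.sum_sum_mul_sub_mul_eq_ite (ZMod.isPrimitive_stdAddChar l), ZMod.card, hslice]
  simp only [e.injective.eq_iff, mul_ite, mul_zero, ← mul_assoc, hl, one_mul]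
  rfl

theorem dftSlice_zero {m n l : ℕ} [NeZero l] (A : Fin l → Matrix (Fin m) (Fin n) ℝ) :
    dftSlice A 0 = (∑ s, A s).map Complex.ofReal := by
  ext i j
  simp [dftSlice_apply, Matrix.sum_apply]

theorem dftSlice_eq_map_conj_dftSlice_neg {m n l : ℕ} [NeZero l]
    (A : Fin l → Matrix (Fin m) (Fin n) ℝ) (k : Fin l) :
    dftSlice A k = (dftSlice A (-k)).map (starRingEnd ℂ) := by
  ext i j
  simp only [Matrix.map_apply, dftSlice_apply, map_sum, map_mul, ZMod.conj_stdAddChar,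
    Complex.conj_ofReal, map_neg, mul_neg, neg_neg]

/-- `(F_l ⊗ I_m)ᴴ · bcirc(A) · (F_l ⊗ I_n)` is block diagonal with diagonal
blocks `D_k(A)`; moreover `D_0(A)` is real and `D_k(A) = conj(D_{l-k}(A))`. -/
theorem dft_block_diagonalizes_bcirc
    (m n l : ℕ) [NeZero l] (A : Fin l → Matrix (Fin m) (Fin n) ℝ) :
    (∀ (p q : Fin l) (i : Fin m) (j : Fin n), p ≠ q →
        ((Matrix.kroneckerMap (· * ·) (dftMatrix l) (1 : Matrix (Fin m) (Fin m) ℂ))ᴴ *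
            (bcirc A).map (Complex.ofReal) *
            Matrix.kroneckerMap (· * ·) (dftMatrix l) (1 : Matrix (Fin n) (Fin n) ℂ))
          (p, i) (q, j) = 0) ∧
    (∀ (p : Fin l) (i : Fin m) (j : Fin n),
        ((Matrix.kroneckerMap (· * ·) (dftMatrix l) (1 : Matrix (Fin m) (Fin m) ℂ))ᴴ *
            (bcirc A).map (Complex.ofReal) *
            Matrix.kroneckerMap (· * ·) (dftMatrix l) (1 : Matrix (Fin n) (Fin n) ℂ))
          (p, i) (p, j) = dftSlice A p i j) ∧
    (∀ (i : Fin m) (j : Fin n), (dftSlice A 0 i j).im = 0) ∧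
    (∀ k : Fin l, dftSlice A k = (dftSlice A (-k)).map (starRingEnd ℂ)) := by
  refine ⟨fun p q i j hpq => ?_, fun p i j => ?_, fun i j => ?_,
    dftSlice_eq_map_conj_dftSlice_neg A⟩
  · rw [dft_conjTranspose_mul_bcirc_mul_dft_apply, if_neg hpq]
  · rw [dft_conjTranspose_mul_bcirc_mul_dft_apply, if_pos rfl]
  · rw [dftSlice_zero, Matrix.map_apply, Complex.ofReal_im]
end

section
/- Let A : Fin l → Matrix (Fin m) (Fin m) ℝ be a symmetric third-order tensor. Then the following are equivalent: (i) for every tensor X : Fin l → Matrix (Fin m) (Fin 1) ℝ, the tensor inner product ⟨X, A * X⟩ is nonnegative; (ii) the real symmetric matrix bcirc(A) is positive semidefinite. -/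
open Matrix

/-- `unfold` of a third-order tensor: the slices stacked vertically. -/
def unfoldT {m n l : ℕ} (A : Fin l → Matrix (Fin m) (Fin n) ℝ) :
    Matrix (Fin l × Fin m) (Fin n) ℝ :=
  Matrix.of fun ki j => A ki.1 ki.2 j

/-- `fold`, the inverse of `unfold`. -/
def foldT {m n l : ℕ} (M : Matrix (Fin l × Fin m) (Fin n) ℝ) :
    Fin l → Matrix (Fin m) (Fin n) ℝ :=
  fun k => Matrix.of fun i j => M (k, i) j

/-- The t-product of third-order tensors: `A * B = fold(bcirc(A) · unfold(B))`. -/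
def tMul {m n p l : ℕ} (A : Fin l → Matrix (Fin m) (Fin n) ℝ)
    (B : Fin l → Matrix (Fin n) (Fin p) ℝ) : Fin l → Matrix (Fin m) (Fin p) ℝ :=
  foldT (bcirc A * unfoldT B)

/-- The entrywise inner product of two third-order tensors. -/
def tdot {m n l : ℕ} (A B : Fin l → Matrix (Fin m) (Fin n) ℝ) : ℝ :=
  ∑ k : Fin l, ∑ i : Fin m, ∑ j : Fin n, A k i j * B k i j

/-! For `X ∈ ℝ^{m×1×l}` the inner product `⟨X, A * X⟩` is the quadratic form of `bcirc(A)` at the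
vector `unfold(X)`, and `unfold` is onto `ℝ^{lm}`; the symmetry of `A` makes `bcirc(A)` symmetric,
which is the remaining half of positive semidefiniteness. -/

theorem bcirc_transpose {m n l : ℕ} (A : Fin l → Matrix (Fin m) (Fin n) ℝ) :
    (bcirc A)ᵀ = bcirc fun k => (A (-k))ᵀ := by
  ext ⟨p, i⟩ ⟨q, j⟩
  have : NeZero l := ⟨fun h => (h ▸ p).elim0⟩
  simp [bcirc, neg_sub]

theorem isHermitian_bcirc {m l : ℕ} (A : Fin l → Matrix (Fin m) (Fin m) ℝ)
    (hsymm : ∀ k : Fin l, (A k)ᵀ = A (-k)) : (bcirc A).IsHermitian := by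
  rw [IsHermitian, conjTranspose_eq_transpose_of_trivial, bcirc_transpose]
  simp_rw [← hsymm, transpose_transpose]

theorem tdot_tMul {m n l : ℕ} (A : Fin l → Matrix (Fin m) (Fin n) ℝ)
    (X : Fin l → Matrix (Fin m) (Fin 1) ℝ) (Y : Fin l → Matrix (Fin n) (Fin 1) ℝ) :
    tdot X (tMul A Y) = (unfoldT X)ᵀ 0 ⬝ᵥ (bcirc A *ᵥ (unfoldT Y)ᵀ 0) := by
  simp [tdot, tMul, foldT, unfoldT, mul_apply, mulVec, dotProduct, Fintype.sum_prod_type]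

theorem surjective_unfoldT_transpose_zero (m l : ℕ) :
    Function.Surjective fun X : Fin l → Matrix (Fin m) (Fin 1) ℝ => (unfoldT X)ᵀ 0 :=
  fun v => ⟨foldT (replicateCol (Fin 1) v), rfl⟩

/-- for a symmetric tensor `A`, `⟨X, A * X⟩ ≥ 0` for all tensors
`X ∈ ℝ^{m×1×l}` iff `bcirc(A)` is positive semidefinite. -/
theorem tPosSemidef_iff_bcirc_posSemidef
    (m l : ℕ) (A : Fin l → Matrix (Fin m) (Fin m) ℝ)
    (hsymm : ∀ k : Fin l, (A k)ᵀ = A (-k)) :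
    (∀ X : Fin l → Matrix (Fin m) (Fin 1) ℝ, 0 ≤ tdot X (tMul A X)) ↔
      (bcirc A).PosSemidef := by
  rw [posSemidef_iff_dotProduct_mulVec, and_iff_right (isHermitian_bcirc A hsymm),
    (surjective_unfoldT_transpose_zero m l).forall]
  simp only [tdot_tMul, star_trivial]
end

section
/- Weak duality for semidefinite programming over third-order tensors: let C and A_1, …, A_r be symmetric tensors in ℝ^{m×m×l} and b ∈ ℝ^r. If X is a symmetric tensor with ⟨A_i, X⟩ = b_i for all i = 1, …, r and bcirc(X) positive semidefinite, and if y ∈ ℝ^r and S is a symmetric tensor with Σ_{i=1}^r y_i · A_i + S = C and bcirc(S) positive semidefinite, then Σ_{i=1}^r b_i y_i ≤ ⟨C, X⟩. -/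
/-!
The entrywise inner product of `bcirc S` and `bcirc X` is `l * ⟨S, X⟩`, since every slice occurs
`l` times in a block circulant matrix; and the entrywise inner product of two positive
semidefinite matrices is nonnegative. Hence `⟨S, X⟩ ≥ 0`, and by dual feasibility
`⟨C, X⟩ = Σ yᵢ ⟨Aᵢ, X⟩ + ⟨S, X⟩ = Σ bᵢ yᵢ + ⟨S, X⟩`.
-/

open Matrix

open scoped ComplexOrder in
/-- By the Schur product theorem `A ⊙ B` is positive semidefinite, and the sum is `1ᴴ (A ⊙ B) 1`. -/
theorem Matrix.PosSemidef.sum_mul_nonneg {𝕜 ι : Type*} [RCLike 𝕜] [Fintype ι]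
    {A B : Matrix ι ι 𝕜} (hA : A.PosSemidef) (hB : B.PosSemidef) :
    0 ≤ ∑ i, ∑ j, A i j * B i j := by
  simpa [dotProduct, mulVec] using (hA.hadamard hB).dotProduct_mulVec_nonneg 1

theorem sum_bcirc_mul_bcirc {m n l : ℕ} [NeZero l] (S T : Fin l → Matrix (Fin m) (Fin n) ℝ) :
    ∑ a, ∑ b, bcirc S a b * bcirc T a b = l * tdot S T := by
  simp only [bcirc, of_apply, Fintype.sum_prod_type]
  have h (p : Fin l) : ∑ i, ∑ q, ∑ j, S (p - q) i j * T (p - q) i j = tdot S T := by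
    rw [Finset.sum_comm, tdot]
    exact Fintype.sum_equiv (Equiv.subLeft p) _ _ fun _ => rfl
  simp [h]

theorem tdot_nonneg_of_posSemidef_bcirc {m l : ℕ} {S T : Fin l → Matrix (Fin m) (Fin m) ℝ}
    (hS : (bcirc S).PosSemidef) (hT : (bcirc T).PosSemidef) : 0 ≤ tdot S T := by
  rcases l.eq_zero_or_pos with rfl | hl
  · simp [tdot]
  · have : NeZero l := ⟨hl.ne'⟩
    have h := hS.sum_mul_nonneg hT
    rw [sum_bcirc_mul_bcirc] at h
    exact nonneg_of_mul_nonneg_right h (Nat.cast_pos.mpr hl)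

section Linearity

variable {m n l : ℕ}

theorem tdot_add_left (A B C : Fin l → Matrix (Fin m) (Fin n) ℝ) :
    tdot (A + B) C = tdot A C + tdot B C := by
  simp [tdot, add_mul, Finset.sum_add_distrib]

theorem tdot_smul_left (c : ℝ) (A B : Fin l → Matrix (Fin m) (Fin n) ℝ) :
    tdot (c • A) B = c * tdot A B := by
  simp [tdot, Finset.mul_sum, mul_assoc]

theorem tdot_sum_left {ι : Type*} (s : Finset ι) (f : ι → Fin l → Matrix (Fin m) (Fin n) ℝ)
    (B : Fin l → Matrix (Fin m) (Fin n) ℝ) :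
    tdot (∑ i ∈ s, f i) B = ∑ i ∈ s, tdot (f i) B := by
  induction s using Finset.cons_induction with
  | empty => simp [tdot]
  | cons i s hi ih => rw [Finset.sum_cons, Finset.sum_cons, tdot_add_left, ih]

end Linearity

theorem tsdp_weak_duality_general
    (m l r : ℕ)
    (C : Fin l → Matrix (Fin m) (Fin m) ℝ)
    (A : Fin r → Fin l → Matrix (Fin m) (Fin m) ℝ)
    (b : Fin r → ℝ)
    (X : Fin l → Matrix (Fin m) (Fin m) ℝ)
    (hXfeas : ∀ i : Fin r, tdot (A i) X = b i)
    (hXpsd : (bcirc X).PosSemidef)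
    (y : Fin r → ℝ)
    (S : Fin l → Matrix (Fin m) (Fin m) ℝ)
    (hdualfeas : (∑ i : Fin r, y i • A i) + S = C)
    (hSpsd : (bcirc S).PosSemidef) :
    ∑ i : Fin r, b i * y i ≤ tdot C X := by
  have hCX : tdot C X = ∑ i, b i * y i + tdot S X := by
    rw [← hdualfeas, tdot_add_left, tdot_sum_left]
    simp only [tdot_smul_left, hXfeas, mul_comm]
  rw [hCX]
  exact le_add_of_nonneg_right (tdot_nonneg_of_posSemidef_bcirc hSpsd hXpsd)

/-- weak duality for T-SDP: any primal feasible `X` and dual feasible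
`(y, S)` satisfy `Σ_i b_i y_i ≤ ⟨C, X⟩`. -/
theorem tsdp_weak_duality
    (m l r : ℕ)
    (C : Fin l → Matrix (Fin m) (Fin m) ℝ)
    (A : Fin r → Fin l → Matrix (Fin m) (Fin m) ℝ)
    (b : Fin r → ℝ)
    (hCsymm : ∀ k : Fin l, (C k)ᵀ = C (-k))
    (hAsymm : ∀ (i : Fin r) (k : Fin l), (A i k)ᵀ = A i (-k))
    (X : Fin l → Matrix (Fin m) (Fin m) ℝ)
    (hXsymm : ∀ k : Fin l, (X k)ᵀ = X (-k))
    (hXfeas : ∀ i : Fin r, tdot (A i) X = b i)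
    (hXpsd : (bcirc X).PosSemidef)
    (y : Fin r → ℝ)
    (S : Fin l → Matrix (Fin m) (Fin m) ℝ)
    (hSsymm : ∀ k : Fin l, (S k)ᵀ = S (-k))
    (hdualfeas : (∑ i : Fin r, y i • A i) + S = C)
    (hSpsd : (bcirc S).PosSemidef) :
    ∑ i : Fin r, b i * y i ≤ tdot C X :=
  tsdp_weak_duality_general m l r C A b X hXfeas hXpsd y S hdualfeas hSpsd
end

section
/- Strong duality for semidefinite programming over third-order tensors: let C and A_1, …, A_r be symmetric tensors in ℝ^{m×m×l} and b ∈ ℝ^r. Suppose there exists a strictly feasible symmetric tensor X̂ (i.e. ⟨A_i, X̂⟩ = b_i for all i and bcirc(X̂) is positive definite), and suppose the primal optimal value p* := inf { ⟨C, X⟩ : X symmetric, ⟨A_i, X⟩ = b_i for all i, bcirc(X) positive semidefinite } is finite. Then the dual problem is solvable with no duality gap: there exist y ∈ ℝ^r and a symmetric tensor S with Σ_{i=1}^r y_i · A_i + S = C, bcirc(S) positive semidefinite, and Σ_{i=1}^r b_i y_i = p*. -/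
open Matrix

/-!
This is conic duality for the cone `K` of symmetric tensors `X` with `bcirc X` positive
semidefinite, inside the space of symmetric tensors. Positive definiteness is an open condition
(the quadratic form stays bounded away from zero on the compact unit sphere), so the strictly
feasible `X̂` is an interior point of `K`. Hahn–Banach separates the open convex set
`{(X, t) | X ∈ int K, ⟨C, X⟩ < t}` from `{(X, t) | X feasible, t ≤ p*}`; because of `X̂` the
separating functional really depends on `t`, and after normalisation its `X`-part is bounded
below on the feasible affine subspace, hence is a combination `∑ yᵢ ⟨Aᵢ, ·⟩` of the constraints.
Then `S = C - ∑ yᵢ Aᵢ` is nonnegative on `K`, and `K` is self-dual: for a vector `v`, the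
symmetric tensor `N⁽ᵈ⁾ᵢⱼ = ∑ₖ v(d+k, i) v(k, j)` has `bcirc N = ∑ₜ wₜ wₜᵀ` over the cyclic
shifts `wₜ` of `v`, and `⟨S, N⟩ = vᵀ bcirc(S) v`.
-/

section LinearAlgebra

variable {E : Type*} [AddCommGroup E] [Module ℝ E]

lemma eq_zero_of_forall_le_add_mul {u α β : ℝ} (h : ∀ t : ℝ, u ≤ α + t * β) : β = 0 := by
  by_contra hβ
  have := h ((u - α - 1) / β)
  rw [div_mul_cancel₀ _ hβ] at this
  linarith

lemma exists_sum_smul_eq_of_forall_le {ι : Type*} [Fintype ι] (a : ι → E →ₗ[ℝ] ℝ)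
    (g : E →ₗ[ℝ] ℝ) {x₀ : E} {u : ℝ} (h : ∀ x, (∀ i, a i x = a i x₀) → u ≤ g x) :
    ∃ y : ι → ℝ, ∑ i, y i • a i = g := by
  refine (Submodule.mem_span_range_iff_exists_fun ℝ).1 (mem_span_of_iInf_ker_le_ker fun z hz => ?_)
  have hz : ∀ i, a i z = 0 := by simpa [Submodule.mem_iInf] using hz
  refine eq_zero_of_forall_le_add_mul (u := u) (α := g x₀) fun t => ?_
  simpa using h (x₀ + t • z) fun i => by simp [hz i]

lemma PointedCone.map_nonpos_of_forall_map_le {K : PointedCone ℝ E} {φ : E →ₗ[ℝ] ℝ} {u : ℝ}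
    (h : ∀ x ∈ K, φ x ≤ u) {x : E} (hx : x ∈ K) : φ x ≤ 0 := by
  by_contra! hpos
  have := h (((|u| + 1) / φ x) • x) (K.smul_mem (by positivity) hx)
  rw [map_smul, smul_eq_mul, div_mul_cancel₀ _ hpos.ne'] at this
  linarith [le_abs_self u]

end LinearAlgebra

section ConicDuality

variable {E : Type*} [AddCommGroup E] [Module ℝ E] [TopologicalSpace E]
  [IsTopologicalAddGroup E] [ContinuousSMul ℝ E]

lemma Convex.le_of_forall_mem_interior_le {s : Set E} (hs : Convex ℝ s)
    (hint : (interior s).Nonempty) {f : E → ℝ} (hf : Continuous f) {u : ℝ}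
    (h : ∀ x ∈ interior s, f x ≤ u) {x : E} (hx : x ∈ s) : f x ≤ u := by
  have hcl : closure (interior s) ⊆ {x | f x ≤ u} :=
    closure_minimal h (isClosed_le hf continuous_const)
  rw [hs.closure_interior_eq_closure_of_nonempty_interior hint] at hcl
  exact hcl (subset_closure hx)

variable {ι : Type*}

theorem exists_separating_of_slater (K : PointedCone ℝ E) (c : E →L[ℝ] ℝ)
    (a : ι → E →ₗ[ℝ] ℝ) (b : ι → ℝ) {x₀ : E} (hx₀ : x₀ ∈ interior (K : Set E))
    (hx₀b : ∀ i, a i x₀ = b i) {p : ℝ}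
    (hp : p ∈ lowerBounds (c '' {x | x ∈ K ∧ ∀ i, a i x = b i})) :
    ∃ (g : E →L[ℝ] ℝ) (u : ℝ), (∀ x ∈ interior (K : Set E), g x - c x ≤ u) ∧
      ∀ x, (∀ i, a i x = b i) → u + p ≤ g x := by
  set F := {x | ∀ i, a i x = b i}
  have hF : Convex ℝ F := by
    simpa only [F, Set.ofPred_forall] using
      convex_iInter fun i => convex_hyperplane (a i).isLinear (b i)
  set φ : E × ℝ →ₗ[ℝ] ℝ := c.toLinearMap ∘ₗ LinearMap.fst ℝ E ℝ - LinearMap.snd ℝ E ℝ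
  have hφ : Continuous φ := (c.continuous.comp continuous_fst).sub continuous_snd
  set Ω := {q ∈ Prod.fst ⁻¹' interior (K : Set E) | φ q < 0}
  set D := {q : E × ℝ | q.1 ∈ F ∧ q.2 ≤ p}
  have hΩ : IsOpen Ω :=
    (isOpen_interior.preimage continuous_fst).inter (isOpen_lt hφ continuous_const)
  have hdisj : Disjoint Ω D := by
    rw [Set.disjoint_left]
    rintro ⟨x, t⟩ ⟨hxK, hxt⟩ ⟨hxF, htp⟩
    have := hp ⟨x, ⟨interior_subset hxK, hxF⟩, rfl⟩
    change c x - t < 0 at hxt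
    linarith
  obtain ⟨f, u, hfΩ, hfD⟩ := geometric_hahn_banach_open
    ((φ.convexOn (K.convex.interior.linear_preimage (LinearMap.fst ℝ E ℝ))).convex_lt 0) hΩ
    (concaveOn_const p hF).convex_hypograph hdisj
  set s := -f (0, 1)
  have hf : ∀ x t, f (x, t) = f (x, 0) - t * s := fun x t => by
    have : ((x, t) : E × ℝ) = (x, 0) + t • (0, 1) := by simp
    rw [this, map_add, map_smul, smul_eq_mul]; ring
  -- `(x₀, c x₀ + 1) ∈ Ω` and `(x₀, p) ∈ D` with `p < c x₀ + 1`: `f` must decrease in `t`.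
  have hs : 0 < s := by
    have h1 := hfΩ (x₀, c x₀ + 1) ⟨hx₀, by simp [φ]⟩
    have h2 := hfD (x₀, p) ⟨hx₀b, le_rfl⟩
    have h3 := hp ⟨x₀, ⟨interior_subset hx₀, hx₀b⟩, rfl⟩
    rw [hf] at h1 h2
    nlinarith
  have hnorm : ∀ x t, s⁻¹ * f (x, t) = s⁻¹ * f (x, 0) - t := fun x t => by
    rw [hf]; field_simp
  refine ⟨s⁻¹ • f.comp (ContinuousLinearMap.inl ℝ E ℝ), s⁻¹ * u, fun x hx => ?_, fun x hx => ?_⟩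
  · refine sub_le_comm.1 (le_of_forall_gt_imp_ge_of_dense fun t ht => ?_)
    have := mul_lt_mul_of_pos_left (hfΩ (x, t) ⟨hx, by simpa [φ]⟩) (inv_pos.2 hs)
    rw [hnorm] at this
    change s⁻¹ * f (x, 0) - s⁻¹ * u ≤ t
    linarith
  · have := mul_le_mul_of_nonneg_left (hfD (x, p) ⟨hx, le_rfl⟩) (inv_pos.2 hs).le
    rw [hnorm] at this
    change s⁻¹ * u + p ≤ s⁻¹ * f (x, 0)
    linarith

theorem exists_dual_optimal_of_slater [Fintype ι] (K : PointedCone ℝ E) (c : E →L[ℝ] ℝ)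
    (a : ι → E →ₗ[ℝ] ℝ) (b : ι → ℝ) {x₀ : E} (hx₀ : x₀ ∈ interior (K : Set E))
    (hx₀b : ∀ i, a i x₀ = b i) {p : ℝ}
    (hp : IsGLB (c '' {x | x ∈ K ∧ ∀ i, a i x = b i}) p) :
    ∃ y : ι → ℝ, (∀ x ∈ K, ∑ i, y i * a i x ≤ c x) ∧ ∑ i, b i * y i = p := by
  obtain ⟨g, u, hgK, hgF⟩ := exists_separating_of_slater K c a b hx₀ hx₀b hp.1
  obtain ⟨y, hy⟩ := exists_sum_smul_eq_of_forall_le a g.toLinearMap (x₀ := x₀)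
    fun x hx => hgF x fun i => (hx i).trans (hx₀b i)
  have hgy : ∀ x, g x = ∑ i, y i * a i x := fun x => by
    simpa using (LinearMap.congr_fun hy x).symm
  have hle : ∀ x ∈ K, g x - c x ≤ u := fun x hx =>
    K.convex.le_of_forall_mem_interior_le ⟨x₀, hx₀⟩ (g.continuous.sub c.continuous) hgK hx
  have hdual : ∀ x ∈ K, g x - c x ≤ 0 := fun x hx =>
    PointedCone.map_nonpos_of_forall_map_le (φ := g.toLinearMap - c.toLinearMap) hle hx
  have hu : 0 ≤ u := by simpa using hle 0 K.zero_mem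
  have hb : ∀ x, (∀ i, a i x = b i) → g x = ∑ i, b i * y i := fun x hx => by
    rw [hgy]
    exact Finset.sum_congr rfl fun i _ => by rw [hx i, mul_comm]
  refine ⟨y, fun x hx => by linarith [hdual x hx, hgy x], le_antisymm ?_ ?_⟩
  · refine hp.2 ?_
    rintro _ ⟨x, ⟨hxK, hxb⟩, rfl⟩
    linarith [hdual x hxK, hb x hxb]
  · linarith [hgF x₀ hx₀b, hb x₀ hx₀b]

end ConicDuality

def Matrix.posSemidefCone (n : Type*) [Fintype n] : PointedCone ℝ (Matrix n n ℝ) where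
  carrier := {M | M.PosSemidef}
  add_mem' := PosSemidef.add
  zero_mem' := PosSemidef.zero
  smul_mem' c _ hM := hM.smul c.2

lemma Matrix.isOpen_setOf_posDef {X : Type*} [TopologicalSpace X] {n : Type*} [Fintype n]
    {f : X → Matrix n n ℝ} (hf : Continuous f) (hH : ∀ x, (f x).IsHermitian) :
    IsOpen {x | (f x).PosDef} := by
  have hq : Continuous fun z : X × (n → ℝ) => z.2 ⬝ᵥ (f z.1 *ᵥ z.2) := by fun_prop
  refine isOpen_iff_eventually.2 fun x₀ hx₀ => ?_
  have hsph : ∀ᶠ x in nhds x₀, ∀ v ∈ Metric.sphere (0 : n → ℝ) 1, 0 < v ⬝ᵥ (f x *ᵥ v) :=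
    (isCompact_sphere 0 1).eventually_forall_of_forall_eventually fun v hv =>
      (isOpen_lt continuous_const hq).mem_nhds <| by
        simpa using hx₀.dotProduct_mulVec_pos (ne_zero_of_mem_unit_sphere ⟨v, hv⟩)
  refine hsph.mono fun x hx => .of_dotProduct_mulVec_pos (hH x) fun v hv => ?_
  have hv' : 0 < ‖v‖ := norm_pos_iff.2 hv
  have := hx (‖v‖⁻¹ • v) (by simp [norm_smul, hv'.ne'])
  rw [smul_dotProduct, mulVec_smul, dotProduct_smul, smul_eq_mul, smul_eq_mul] at this
  rw [star_trivial]
  exact pos_of_mul_pos_right (pos_of_mul_pos_right this (by positivity)) (by positivity)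

section Tensor

variable {m n l : ℕ}

def bcircLinearMap :
    (Fin l → Matrix (Fin m) (Fin n) ℝ) →ₗ[ℝ] Matrix (Fin l × Fin m) (Fin l × Fin n) ℝ where
  toFun := bcirc
  map_add' _ _ := rfl
  map_smul' _ _ := rfl

def tdotBilin :
    (Fin l → Matrix (Fin m) (Fin n) ℝ) →ₗ[ℝ] (Fin l → Matrix (Fin m) (Fin n) ℝ) →ₗ[ℝ] ℝ :=
  LinearMap.mk₂ ℝ tdot
    (fun _ _ _ => by simp [tdot, add_mul, Finset.sum_add_distrib])
    (fun _ _ _ => by simp [tdot, Finset.mul_sum, mul_assoc])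
    (fun _ _ _ => by simp [tdot, mul_add, Finset.sum_add_distrib])
    (fun _ _ _ => by simp [tdot, Finset.mul_sum, mul_left_comm])

@[simp]
lemma tdotBilin_apply (A B : Fin l → Matrix (Fin m) (Fin n) ℝ) : tdotBilin A B = tdot A B := rfl

def symmTensors (m l : ℕ) : Submodule ℝ (Fin l → Matrix (Fin m) (Fin m) ℝ) where
  carrier := {X | ∀ k, (X k)ᵀ = X (-k)}
  add_mem' hX hY k := by simp [transpose_add, hX k, hY k]
  zero_mem' k := by simp
  smul_mem' c X hX k := by simp [transpose_smul, hX k]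

lemma bcirc_isHermitian {X : Fin l → Matrix (Fin m) (Fin m) ℝ} (hX : X ∈ symmTensors m l) :
    (bcirc X).IsHermitian := by
  ext ⟨p, i⟩ ⟨q, j⟩
  have hneg : -(q - p) = p - q := by
    cases l with
    | zero => exact p.elim0
    | succ => exact neg_sub q p
  simp [bcirc, ← hneg, ← hX (q - p)]

def circOuter (v : Fin l × Fin m → ℝ) : Fin l → Matrix (Fin m) (Fin m) ℝ :=
  fun d => of fun i j => ∑ k, v (d + k, i) * v (k, j)

section NeZero

variable [NeZero l]

lemma circOuter_mem_symmTensors (v : Fin l × Fin m → ℝ) : circOuter v ∈ symmTensors m l :=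
  fun d => by
  ext i j
  simp only [circOuter, transpose_apply, of_apply]
  exact Fintype.sum_equiv (Equiv.addLeft d) _ _ fun k => by simp [mul_comm]

lemma bcirc_circOuter (v : Fin l × Fin m → ℝ) :
    bcirc (circOuter v) =
      ∑ t, vecMulVec (fun p => v (p.1 + t, p.2)) (fun p => v (p.1 + t, p.2)) := by
  ext ⟨p, i⟩ ⟨q, j⟩
  simp only [bcirc, circOuter, of_apply, Matrix.sum_apply, vecMulVec_apply]
  refine (Equiv.sum_comp (Equiv.addLeft q) _).symm.trans (Finset.sum_congr rfl fun t _ => ?_)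
  rw [Equiv.coe_addLeft, show p - q + (q + t) = p + t by abel]

lemma posSemidef_bcirc_circOuter (v : Fin l × Fin m → ℝ) : (bcirc (circOuter v)).PosSemidef := by
  rw [bcirc_circOuter]
  exact posSemidef_sum _ fun t _ => by
    simpa using posSemidef_vecMulVec_self_star fun p : Fin l × Fin m => v (p.1 + t, p.2)

lemma dotProduct_bcirc_mulVec (S : Fin l → Matrix (Fin m) (Fin m) ℝ) (v : Fin l × Fin m → ℝ) :
    v ⬝ᵥ (bcirc S *ᵥ v) = tdot S (circOuter v) := by
  simp only [dotProduct, mulVec, bcirc, of_apply, Fintype.sum_prod_type, tdot, circOuter,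
    Finset.mul_sum]
  calc ∑ p, ∑ i, ∑ q, ∑ j, v (p, i) * (S (p - q) i j * v (q, j))
      = ∑ q, ∑ p, ∑ i, ∑ j, v (p, i) * (S (p - q) i j * v (q, j)) :=
        (Finset.sum_congr rfl fun p _ => Finset.sum_comm).trans Finset.sum_comm
    _ = ∑ q, ∑ d, ∑ i, ∑ j, v (d + q, i) * (S d i j * v (q, j)) :=
        Finset.sum_congr rfl fun q _ =>
          (Equiv.sum_comp (Equiv.addRight q) _).symm.trans (by simp)
    _ = ∑ d, ∑ i, ∑ j, ∑ q, S d i j * (v (d + q, i) * v (q, j)) := by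
        rw [Finset.sum_comm]
        refine Finset.sum_congr rfl fun d _ => ?_
        rw [Finset.sum_comm]
        refine Finset.sum_congr rfl fun i _ => ?_
        rw [Finset.sum_comm]
        exact Finset.sum_congr rfl fun j _ => Finset.sum_congr rfl fun q _ => by ring

end NeZero

lemma posSemidef_bcirc_of_forall_tdot_nonneg {S : Fin l → Matrix (Fin m) (Fin m) ℝ}
    (hS : S ∈ symmTensors m l)
    (h : ∀ X ∈ symmTensors m l, (bcirc X).PosSemidef → 0 ≤ tdot S X) : (bcirc S).PosSemidef := by
  refine .of_dotProduct_mulVec_nonneg (bcirc_isHermitian hS) fun v => ?_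
  obtain rfl | _ := eq_zero_or_neZero l
  · simp [dotProduct]
  rw [star_trivial, dotProduct_bcirc_mulVec]
  exact h _ (circOuter_mem_symmTensors v) (posSemidef_bcirc_circOuter v)

end Tensor

/-- strong duality for T-SDP: if the primal is strictly feasible and its
optimal value `p*` is finite, then the dual is solvable and attains `p*`. -/
theorem tsdp_strong_duality
    (m l r : ℕ)
    (C : Fin l → Matrix (Fin m) (Fin m) ℝ)
    (A : Fin r → Fin l → Matrix (Fin m) (Fin m) ℝ)
    (b : Fin r → ℝ)
    (hCsymm : ∀ k : Fin l, (C k)ᵀ = C (-k))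
    (hAsymm : ∀ (i : Fin r) (k : Fin l), (A i k)ᵀ = A i (-k))
    (Xhat : Fin l → Matrix (Fin m) (Fin m) ℝ)
    (hXhatsymm : ∀ k : Fin l, (Xhat k)ᵀ = Xhat (-k))
    (hXhatfeas : ∀ i : Fin r, tdot (A i) Xhat = b i)
    (hXhatpd : (bcirc Xhat).PosDef)
    (pstar : ℝ)
    (hpstar : IsGLB {v : ℝ | ∃ X : Fin l → Matrix (Fin m) (Fin m) ℝ,
        (∀ k : Fin l, (X k)ᵀ = X (-k)) ∧ (∀ i : Fin r, tdot (A i) X = b i) ∧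
          (bcirc X).PosSemidef ∧ v = tdot C X} pstar) :
    ∃ (y : Fin r → ℝ) (S : Fin l → Matrix (Fin m) (Fin m) ℝ),
      (∀ k : Fin l, (S k)ᵀ = S (-k)) ∧
      (∑ i : Fin r, y i • A i) + S = C ∧
      (bcirc S).PosSemidef ∧
      ∑ i : Fin r, b i * y i = pstar := by
  set V := symmTensors m l
  set K : PointedCone ℝ V := (posSemidefCone _).comap (bcircLinearMap ∘ₗ V.subtype)
  have hXhat : (⟨Xhat, hXhatsymm⟩ : V) ∈ interior (K : Set V) :=
    interior_maximal (fun X hX => PosDef.posSemidef hX) (isOpen_setOf_posDef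
      (bcircLinearMap.continuous_of_finiteDimensional.comp continuous_subtype_val)
      fun X => bcirc_isHermitian X.2) hXhatpd
  obtain ⟨y, hdual, hval⟩ := exists_dual_optimal_of_slater K
    (LinearMap.toContinuousLinearMap ((tdotBilin C).comp V.subtype))
    (fun i => (tdotBilin (A i)).comp V.subtype) b hXhat hXhatfeas (p := pstar) (by
      convert hpstar using 1
      ext v
      exact ⟨fun ⟨X, ⟨hXpsd, hXb⟩, hv⟩ => ⟨X, X.2, hXb, hXpsd, hv.symm⟩,
        fun ⟨X, hXs, hXb, hXpsd, hv⟩ => ⟨⟨X, hXs⟩, ⟨hXpsd, hXb⟩, hv.symm⟩⟩)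
  set S := C - ∑ i, y i • A i
  have hS : S ∈ V := V.sub_mem hCsymm (V.sum_mem fun i _ => V.smul_mem _ (hAsymm i))
  refine ⟨y, S, hS, add_sub_cancel _ _, posSemidef_bcirc_of_forall_tdot_nonneg hS
    fun X hX hXpsd => ?_, hval⟩
  have hSX : tdot S X = tdot C X - ∑ i, y i * tdot (A i) X := by
    simp only [S, ← tdotBilin_apply, map_sub, map_sum, map_smul, LinearMap.sub_apply,
      LinearMap.coe_sum, LinearMap.coe_smul, Finset.sum_apply, Pi.smul_apply, smul_eq_mul]
  have hCX : ∑ i, y i * tdot (A i) X ≤ tdot C X := hdual ⟨X, hX⟩ hXpsd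
  linarith
end

section
/- T-decomposition of T-positive semidefinite tensors: let Z : Fin l → Matrix (Fin m) (Fin m) ℝ be a symmetric tensor. Then bcirc(Z) is positive semidefinite if and only if there exist finitely many tensors u¹, …, uᵗ : Fin l → Matrix (Fin m) (Fin 1) ℝ such that bcirc(Z) = Σ_{i=1}^{t} bcirc(uⁱ) · (bcirc(uⁱ))ᵀ (equivalently, Z = Σ_{i=1}^{t} uⁱ * (uⁱ)ᵀ as tensors). -/
open Matrix

/-! The square root of `bcirc Z` commutes with the cyclic block shifts because `bcirc Z` does, and
a matrix commuting with all of them is block circulant, `√(bcirc Z) = bcirc W`. Since the square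
root is symmetric, `bcirc Z = bcirc W * (bcirc W)ᵀ`, which splits column by column of `W` into a
sum of `bcirc u * (bcirc u)ᵀ` with `u` running over the columns of `W`. The converse holds because every
`B * Bᵀ` is positive semidefinite. -/

def blockShift {l : ℕ} [NeZero l] (ι : Type*) (c : Fin l) : Fin l × ι ≃ Fin l × ι :=
  (Equiv.addRight c).prodCongr (Equiv.refl ι)

section BlockCirculant

variable {l m n : ℕ}

lemma bcirc_submatrix_blockShift [NeZero l] (A : Fin l → Matrix (Fin m) (Fin n) ℝ) (c : Fin l) :
    (bcirc A).submatrix (blockShift (Fin m) c) (blockShift (Fin n) c) = bcirc A := by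
  ext p q
  simp [bcirc, blockShift, add_sub_add_right_eq_sub]

lemma exists_eq_bcirc_of_submatrix_blockShift [NeZero l]
    {M : Matrix (Fin l × Fin m) (Fin l × Fin n) ℝ}
    (hM : ∀ c, M.submatrix (blockShift (Fin m) c) (blockShift (Fin n) c) = M) :
    ∃ A : Fin l → Matrix (Fin m) (Fin n) ℝ, M = bcirc A := by
  refine ⟨fun k => of fun i j => M (k, i) (0, j), ?_⟩
  ext ⟨p, i⟩ ⟨q, j⟩
  simpa [bcirc, blockShift] using (congrFun (congrFun (hM q) (p - q, i)) (0, j))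

lemma bcirc_mul_transpose_self_eq_sum_columns (W : Fin l → Matrix (Fin m) (Fin n) ℝ) :
    bcirc W * (bcirc W)ᵀ = ∑ j : Fin n,
      bcirc (fun k => (W k).submatrix id fun _ : Fin 1 => j) *
        (bcirc fun k => (W k).submatrix id fun _ : Fin 1 => j)ᵀ := by
  ext ⟨p, i⟩ ⟨p', i'⟩
  simp only [Matrix.sum_apply, mul_apply, transpose_apply, bcirc, of_apply, Fintype.sum_prod_type]
  rw [Finset.sum_comm]
  simp

lemma posSemidef_bcirc_mul_transpose_self (A : Fin l → Matrix (Fin m) (Fin n) ℝ) :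
    (bcirc A * (bcirc A)ᵀ).PosSemidef := by
  simpa [conjTranspose_eq_transpose_of_trivial] using posSemidef_self_mul_conjTranspose (bcirc A)

end BlockCirculant

section SquareRoot

open scoped MatrixOrder ComplexOrder

lemma Matrix.PosSemidef.cfcSqrt_submatrix_of_submatrix_eq {n 𝕜 : Type*} [Fintype n]
    [DecidableEq n] [RCLike 𝕜] {M : Matrix n n 𝕜} (hM : M.PosSemidef) {e : n ≃ n}
    (he : M.submatrix e e = M) : (CFC.sqrt M).submatrix e e = CFC.sqrt M := by
  refine (CFC.sqrt_unique ?_ ((CFC.sqrt_nonneg M).posSemidef.submatrix e).nonneg).symm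
  rw [submatrix_mul_equiv, CFC.sqrt_mul_sqrt_self M hM.nonneg, he]

lemma exists_bcirc_eq_bcirc_mul_transpose_of_posSemidef {l m : ℕ}
    {Z : Fin l → Matrix (Fin m) (Fin m) ℝ} (hZ : (bcirc Z).PosSemidef) :
    ∃ W : Fin l → Matrix (Fin m) (Fin m) ℝ, bcirc Z = bcirc W * (bcirc W)ᵀ := by
  obtain _ | l := l
  · exact ⟨Z, Subsingleton.elim _ _⟩
  obtain ⟨W, hW⟩ := exists_eq_bcirc_of_submatrix_blockShift fun c =>
    hZ.cfcSqrt_submatrix_of_submatrix_eq (bcirc_submatrix_blockShift Z c)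
  have hsymm : (CFC.sqrt (bcirc Z))ᵀ = CFC.sqrt (bcirc Z) := by
    simpa [conjTranspose_eq_transpose_of_trivial] using
      (CFC.sqrt_nonneg (bcirc Z)).posSemidef.isHermitian.eq
  refine ⟨W, ?_⟩
  rw [← hW, hsymm, CFC.sqrt_mul_sqrt_self _ hZ.nonneg]

end SquareRoot

theorem tpsd_iff_tdecomposition_general
    (m l : ℕ) (Z : Fin l → Matrix (Fin m) (Fin m) ℝ) :
    (bcirc Z).PosSemidef ↔
      ∃ (t : ℕ) (u : Fin t → Fin l → Matrix (Fin m) (Fin 1) ℝ),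
        bcirc Z = ∑ i : Fin t, bcirc (u i) * (bcirc (u i))ᵀ := by
  constructor
  · intro hZ
    obtain ⟨W, hW⟩ := exists_bcirc_eq_bcirc_mul_transpose_of_posSemidef hZ
    exact ⟨m, _, hW.trans (bcirc_mul_transpose_self_eq_sum_columns W)⟩
  · rintro ⟨t, u, hu⟩
    rw [hu]
    exact posSemidef_sum _ fun i _ => posSemidef_bcirc_mul_transpose_self (u i)

/-- T-decomposition of T-PSD tensors: a symmetric tensor `Z` has `bcirc(Z)`
positive semidefinite iff `bcirc(Z) = Σ_i bcirc(uⁱ) · (bcirc(uⁱ))ᵀ` for finitely many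
tensors `uⁱ ∈ ℝ^{m×1×l}`. -/
theorem tpsd_iff_tdecomposition
    (m l : ℕ) (Z : Fin l → Matrix (Fin m) (Fin m) ℝ)
    (hZsymm : ∀ k : Fin l, (Z k)ᵀ = Z (-k)) :
    (bcirc Z).PosSemidef ↔
      ∃ (t : ℕ) (u : Fin t → Fin l → Matrix (Fin m) (Fin 1) ℝ),
        bcirc Z = ∑ i : Fin t, bcirc (u i) * (bcirc (u i))ᵀ :=
  tpsd_iff_tdecomposition_general m l Z
end

section
/- Characterization of l-block circulant SOS polynomials (Theorem 3): let v : Fin l × Fin m → MvPolynomial (Fin n) ℝ be a family of polynomials (in the paper, the monomial vector [x]_d with s(d) = m·l) and let q ∈ MvPolynomial (Fin n) ℝ. Then the following are equivalent: (i) there exist finitely many tensors u¹, …, uᵗ : Fin l → Matrix (Fin m) (Fin 1) ℝ such that q = Σ_{i=1}^{t} Σ_{j ∈ Fin l} ( Σ_{(p,a) ∈ Fin l × Fin m} bcirc(uⁱ) (p,a) (j,0) · v (p,a) )²; (ii) there exists a symmetric tensor Z : Fin l → Matrix (Fin m) (Fin m) ℝ with bcirc(Z) positive semidefinite such that q = Σ_{(p,a),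 (q,b) ∈ Fin l × Fin m} bcirc(Z) (p,a) (q,b) · v (p,a) · v (q,b). -/
/-!
Both conditions say that `q = vᵀ G v` for a Gram matrix of the form
`G = ∑ᵢ bcirc(uⁱ) bcirc(uⁱ)ᵀ`: the sum of squares in (i) runs over the columns `(j, 0)` of
`bcirc(uⁱ)`. Such a product is again block circulant,
`bcirc(u) bcirc(u)ᵀ = bcirc(k ↦ ∑ⱼ u⁽ᵏ⁺ʲ⁾ u⁽ʲ⁾ᵀ)`, and positive semidefinite, which gives
(i) ⇒ (ii); the symmetry of `Z` is the symmetry of `bcirc(Z)`. Conversely, write a positive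
semidefinite `bcirc(Z)` as `∑ᵢ wᵢ wᵢᵀ`. Because `bcirc(Z)` is invariant under shifting rows and
columns cyclically by the same amount, averaging this decomposition over the `l` shifts
shows that `Z` is the sum of `k ↦ ∑ⱼ uᵢ⁽ᵏ⁺ʲ⁾ uᵢ⁽ʲ⁾ᵀ` for `uᵢ⁽ʲ⁾ = wᵢ(j, ·) / √l`.
-/

open Matrix

open MvPolynomial

section PolyQuadForm

variable {ι σ : Type*} [Fintype ι]

noncomputable def polyQuadForm (G : Matrix ι ι ℝ) (v : ι → MvPolynomial σ ℝ) :
    MvPolynomial σ ℝ :=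
  ∑ i, ∑ j, C (G i j) * v i * v j

lemma polyQuadForm_sum {τ : Type*} (s : Finset τ) (G : τ → Matrix ι ι ℝ)
    (v : ι → MvPolynomial σ ℝ) :
    polyQuadForm (∑ t ∈ s, G t) v = ∑ t ∈ s, polyQuadForm (G t) v := by
  simp only [polyQuadForm, Matrix.sum_apply, map_sum, Finset.sum_mul]
  exact (Finset.sum_congr rfl fun _ _ => Finset.sum_comm).trans Finset.sum_comm

lemma sum_sq_eq_polyQuadForm_mul_transpose {κ : Type*} [Fintype κ] (B : Matrix ι κ ℝ)
    (v : ι → MvPolynomial σ ℝ) :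
    ∑ k, (∑ i, C (B i k) * v i) ^ 2 = polyQuadForm (B * Bᵀ) v := by
  simp only [polyQuadForm, mul_apply, transpose_apply, map_sum, map_mul, Finset.sum_mul, sq,
    Finset.mul_sum]
  rw [Finset.sum_comm]
  refine Finset.sum_congr rfl fun i _ => ?_
  rw [Finset.sum_comm]
  exact Finset.sum_congr rfl fun j _ => Finset.sum_congr rfl fun k _ => by ring

end PolyQuadForm

section BlockCirculant

variable {l m n : ℕ}

def circGram (u : Fin l → Matrix (Fin m) (Fin n) ℝ) : Fin l → Matrix (Fin m) (Fin m) ℝ :=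
  fun k => ∑ j, u (k + j) * (u j)ᵀ

lemma bcirc_sum {τ : Type*} (s : Finset τ) (A : τ → Fin l → Matrix (Fin m) (Fin n) ℝ) :
    bcirc (∑ t ∈ s, A t) = ∑ t ∈ s, bcirc (A t) := by
  ext p q
  simp [bcirc, Matrix.sum_apply]

lemma transpose_bcirc (A : Fin l → Matrix (Fin m) (Fin n) ℝ) :
    (bcirc A)ᵀ = bcirc fun k => (A (-k))ᵀ := by
  ext p q
  have : NeZero l := ⟨p.1.pos.ne'⟩
  simp [bcirc]

lemma bcirc_injective :
    Function.Injective (bcirc : (Fin l → Matrix (Fin m) (Fin n) ℝ) → _) := by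
  intro A B h
  ext k i j
  have : NeZero l := ⟨k.pos.ne'⟩
  simpa [bcirc] using congr_fun₂ h (k, i) (0, j)

lemma isSymm_bcirc_iff (Z : Fin l → Matrix (Fin m) (Fin m) ℝ) :
    (bcirc Z).IsSymm ↔ ∀ k, (Z k)ᵀ = Z (-k) := by
  rw [IsSymm, transpose_bcirc, bcirc_injective.eq_iff, funext_iff]
  refine ⟨fun h k => ?_, fun h k => ?_⟩
  · rw [← h (-k), neg_neg]
  · rw [h, neg_neg]

lemma bcirc_mul_transpose_self (u : Fin l → Matrix (Fin m) (Fin n) ℝ) :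
    bcirc u * (bcirc u)ᵀ = bcirc (circGram u) := by
  ext ⟨p, a⟩ ⟨q, b⟩
  have : NeZero l := ⟨p.pos.ne'⟩
  simp only [bcirc, circGram, mul_apply, transpose_apply, of_apply, Fintype.sum_prod_type,
    Matrix.sum_apply]
  refine Fintype.sum_equiv (Equiv.subLeft q) _ _ fun j => ?_
  rw [Equiv.subLeft_apply, show p - q + (q - j) = p - j by abel]

lemma posSemidef_bcirc_sum_circGram {τ : Type*} (s : Finset τ)
    (u : τ → Fin l → Matrix (Fin m) (Fin n) ℝ) :
    (bcirc (∑ t ∈ s, circGram (u t))).PosSemidef := by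
  rw [bcirc_sum]
  refine posSemidef_sum s fun t _ => ?_
  rw [← bcirc_mul_transpose_self, ← conjTranspose_eq_transpose_of_trivial]
  exact posSemidef_self_mul_conjTranspose _

lemma exists_eq_sum_circGram_of_posSemidef {Z : Fin l → Matrix (Fin m) (Fin m) ℝ}
    (hZ : (bcirc Z).PosSemidef) :
    ∃ (t : ℕ) (u : Fin t → Fin l → Matrix (Fin m) (Fin 1) ℝ), Z = ∑ i, circGram (u i) := by
  obtain ⟨t, w, hw⟩ := posSemidef_iff_eq_sum_vecMulVec.mp hZ
  refine ⟨t, fun i k => of fun a _ => w i (k, a) / √l, ?_⟩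
  ext k a b
  have : NeZero l := ⟨k.pos.ne'⟩
  have hshift : ∀ r, Z k a b = ∑ i, w i (k + r, a) * w i (r, b) := by
    intro r
    simpa [bcirc, vecMulVec_apply, Matrix.sum_apply] using congr_fun₂ hw (k + r, a) (r, b)
  have hl : (l : ℝ) ≠ 0 := Nat.cast_ne_zero.mpr (NeZero.ne l)
  calc Z k a b = (l : ℝ)⁻¹ * ∑ r : Fin l, Z k a b := by simp [hl]
    _ = (l : ℝ)⁻¹ * ∑ r : Fin l, ∑ i, w i (k + r, a) * w i (r, b) := by simp_rw [← hshift]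
    _ = _ := by
      simp only [Finset.sum_apply, circGram, Matrix.sum_apply, mul_apply, transpose_apply,
        of_apply, Fin.sum_univ_one, Finset.mul_sum]
      rw [Finset.sum_comm]
      refine Finset.sum_congr rfl fun i _ => Finset.sum_congr rfl fun r _ => ?_
      rw [div_mul_div_comm, Real.mul_self_sqrt (Nat.cast_nonneg l)]
      ring

lemma sum_sq_bcirc_eq_polyQuadForm {σ : Type*} (u : Fin l → Matrix (Fin m) (Fin 1) ℝ)
    (v : Fin l × Fin m → MvPolynomial σ ℝ) :
    ∑ j : Fin l, (∑ pa, C (bcirc u pa (j, 0)) * v pa) ^ 2 =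
      polyQuadForm (bcirc (circGram u)) v := by
  rw [← bcirc_mul_transpose_self, ← sum_sq_eq_polyQuadForm_mul_transpose, Fintype.sum_prod_type]
  simp only [Fin.sum_univ_one]

lemma sum_sum_sq_bcirc_eq_polyQuadForm {σ τ : Type*} [Fintype τ]
    (u : τ → Fin l → Matrix (Fin m) (Fin 1) ℝ) (v : Fin l × Fin m → MvPolynomial σ ℝ) :
    ∑ i, ∑ j : Fin l, (∑ pa, C (bcirc (u i) pa (j, 0)) * v pa) ^ 2 =
      polyQuadForm (bcirc (∑ i, circGram (u i))) v := by
  simp only [sum_sq_bcirc_eq_polyQuadForm, bcirc_sum, polyQuadForm_sum]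

end BlockCirculant

/-- characterization of `l`-block circulant SOS polynomials: `q` is a sum of
squares of the entries of `bcirc(uⁱ)ᵀ · v` over generators `uⁱ` iff `q` is a quadratic
form `vᵀ · bcirc(Z) · v` for some symmetric tensor `Z` with `bcirc(Z)` PSD. -/
theorem block_circulant_sos_characterization
    (n m l : ℕ) (v : Fin l × Fin m → MvPolynomial (Fin n) ℝ)
    (q : MvPolynomial (Fin n) ℝ) :
    (∃ (t : ℕ) (u : Fin t → Fin l → Matrix (Fin m) (Fin 1) ℝ),
        q = ∑ i : Fin t, ∑ j : Fin l,
          (∑ pa : Fin l × Fin m,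
            MvPolynomial.C (bcirc (u i) pa (j, 0)) * v pa) ^ 2) ↔
    (∃ Z : Fin l → Matrix (Fin m) (Fin m) ℝ,
        (∀ k : Fin l, (Z k)ᵀ = Z (-k)) ∧ (bcirc Z).PosSemidef ∧
        q = ∑ pa : Fin l × Fin m, ∑ qb : Fin l × Fin m,
          MvPolynomial.C (bcirc Z pa qb) * v pa * v qb) := by
  constructor
  · rintro ⟨t, u, rfl⟩
    have hpsd := posSemidef_bcirc_sum_circGram Finset.univ u
    exact ⟨_, (isSymm_bcirc_iff _).mp (isHermitian_iff_isSymm.mp hpsd.isHermitian), hpsd,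
      sum_sum_sq_bcirc_eq_polyQuadForm u v⟩
  · rintro ⟨Z, -, hZ, rfl⟩
    obtain ⟨t, u, rfl⟩ := exists_eq_sum_circGram_of_posSemidef hZ
    exact ⟨t, u, (sum_sum_sq_bcirc_eq_polyQuadForm u v).symm⟩
end

section
/- Every value feasible for the block circulant SOS relaxation is feasible for the standard SOS relaxation: let f, g_1, …, g_r : (Fin n → ℝ) → ℝ, γ ∈ ℝ, and V_0 : (Fin n → ℝ) → (Fin l_0 × Fin m_0 → ℝ), V_i : (Fin n → ℝ) → (Fin l_i × Fin m_i → ℝ). If there exist symmetric tensors Z_0 ∈ ℝ^{m_0×m_0×l_0}, Z_i ∈ ℝ^{m_i×m_i×l_i} with bcirc(Z_0) and each bcirc(Z_i) positive semidefinite such that for all x, f(x) − γ = ⟨Z_0, fold(V_0 x) * fold(V_0 x)ᵀ⟩ + Σ_{i=1}^{r} g_i(x) · ⟨Z_i, fold(V_i x) * fold(V_i x)ᵀ⟩, then there exist real symmetric positive semidefinite matrices M_0 of size (m_0·l_0) and M_i of size (m_i·l_i) such that for all x, f(x) − γ = (V_0 x)ᵀ · M_0 · (V_0 x) + Σ_{i=1}^{r}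 g_i(x) · (V_i x)ᵀ · M_i · (V_i x). -/
/-! The tensor certificates are the matrix certificates `M = bcirc Z` in disguise: the `k`-th
slice of `fold v * (fold v)ᵀ` is the circular correlation `∑ q, v_{k+q} v_qᵀ`, and substituting
`p = k + q` turns `⟨Z, fold v * (fold v)ᵀ⟩` into the quadratic form `vᵀ bcirc(Z) v`. -/

open Matrix

/-- The transpose of a third-order tensor: `(Aᵀ)⁽ᵏ⁾ = (A⁽⁻ᵏ⁾)ᵀ`. -/
def tTranspose {m n l : ℕ} (A : Fin l → Matrix (Fin m) (Fin n) ℝ) :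
    Fin l → Matrix (Fin n) (Fin m) ℝ :=
  fun k => (A (-k))ᵀ

/-- `fold` of a vector `v ∈ ℝ^{ml}` regarded as an `ml × 1` matrix. -/
def foldVec {m l : ℕ} (v : Fin l × Fin m → ℝ) : Fin l → Matrix (Fin m) (Fin 1) ℝ :=
  fun k => Matrix.of fun i _ => v (k, i)

open Finset

section Correlation

variable {m l : ℕ}

theorem tMul_foldVec_tTranspose_foldVec_apply [NeZero l] (v : Fin l × Fin m → ℝ) (k : Fin l)
    (i j : Fin m) :
    tMul (foldVec v) (tTranspose (foldVec v)) k i j = ∑ q : Fin l, v (k + q, i) * v (q, j) := by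
  simp only [tMul, foldT, bcirc, unfoldT, tTranspose, foldVec, mul_apply, of_apply,
    transpose_apply, Fintype.sum_prod_type, Fin.sum_univ_one]
  exact Fintype.sum_equiv (Equiv.neg _) _ _ fun q => by simp [sub_eq_add_neg]

theorem tdot_tMul_foldVec_tTranspose_foldVec (Z : Fin l → Matrix (Fin m) (Fin m) ℝ)
    (v : Fin l × Fin m → ℝ) :
    tdot Z (tMul (foldVec v) (tTranspose (foldVec v))) = v ⬝ᵥ bcirc Z *ᵥ v := by
  obtain rfl | hl := Nat.eq_zero_or_pos l
  · simp [tdot, dotProduct]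
  have : NeZero l := ⟨hl.ne'⟩
  calc tdot Z (tMul (foldVec v) (tTranspose (foldVec v)))
      = ∑ k, ∑ i, ∑ j, ∑ q, Z k i j * (v (k + q, i) * v (q, j)) := by
        simp only [tdot, tMul_foldVec_tTranspose_foldVec_apply, mul_sum]
    _ = ∑ q, ∑ k, ∑ i, ∑ j, Z k i j * (v (k + q, i) * v (q, j)) := by
        simp_rw [sum_comm (s := (univ : Finset (Fin m))) (t := (univ : Finset (Fin l)))]
        rw [sum_comm]
    _ = ∑ q, ∑ p, ∑ i, ∑ j, v (p, i) * (Z (p - q) i j * v (q, j)) :=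
        sum_congr rfl fun q _ => ((Equiv.subRight q).sum_comp _).symm.trans
          (by simp [mul_left_comm])
    _ = v ⬝ᵥ bcirc Z *ᵥ v := by
        simp only [dotProduct, mulVec, bcirc, of_apply, Fintype.sum_prod_type, mul_sum]
        simp_rw [sum_comm (s := (univ : Finset (Fin m))) (t := (univ : Finset (Fin l)))]
        rw [sum_comm]

end Correlation

/-- a value feasible for the block circulant SOS relaxation is feasible for
the standard SOS relaxation: tensor certificates yield positive semidefinite matrix
certificates. -/
theorem block_circulant_feasible_implies_sos_feasible
    (n r : ℕ) (f : (Fin n → ℝ) → ℝ) (g : Fin r → (Fin n → ℝ) → ℝ) (γ : ℝ)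
    (l0 m0 : ℕ) (li mi : Fin r → ℕ)
    (V0 : (Fin n → ℝ) → (Fin l0 × Fin m0 → ℝ))
    (V : ∀ i : Fin r, (Fin n → ℝ) → (Fin (li i) × Fin (mi i) → ℝ))
    (h : ∃ (Z0 : Fin l0 → Matrix (Fin m0) (Fin m0) ℝ)
        (Z : ∀ i : Fin r, Fin (li i) → Matrix (Fin (mi i)) (Fin (mi i)) ℝ),
        (∀ k : Fin l0, (Z0 k)ᵀ = Z0 (-k)) ∧
        (∀ (i : Fin r) (k : Fin (li i)), (Z i k)ᵀ = Z i (-k)) ∧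
        (bcirc Z0).PosSemidef ∧
        (∀ i : Fin r, (bcirc (Z i)).PosSemidef) ∧
        ∀ x : Fin n → ℝ,
          f x - γ = tdot Z0 (tMul (foldVec (V0 x)) (tTranspose (foldVec (V0 x)))) +
            ∑ i : Fin r,
              g i x * tdot (Z i) (tMul (foldVec (V i x)) (tTranspose (foldVec (V i x))))) :
    ∃ (M0 : Matrix (Fin l0 × Fin m0) (Fin l0 × Fin m0) ℝ)
      (M : ∀ i : Fin r, Matrix (Fin (li i) × Fin (mi i)) (Fin (li i) × Fin (mi i)) ℝ),
      M0.PosSemidef ∧ (∀ i : Fin r, (M i).PosSemidef) ∧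
      ∀ x : Fin n → ℝ,
        f x - γ = V0 x ⬝ᵥ M0.mulVec (V0 x) +
          ∑ i : Fin r, g i x * (V i x ⬝ᵥ (M i).mulVec (V i x)) := by
  obtain ⟨Z0, Z, -, -, hZ0, hZ, hcert⟩ := h
  refine ⟨bcirc Z0, fun i => bcirc (Z i), hZ0, hZ, fun x => ?_⟩
  simp only [hcert x, tdot_tMul_foldVec_tTranspose_foldVec]
end

section
/- A principal subtensor of a T-positive semidefinite tensor is T-positive semidefinite: let A : Fin l → Matrix (Fin m') (Fin m') ℝ be a symmetric tensor with bcirc(A) positive semidefinite, and let e : Fin m → Fin m' be injective. Define B : Fin l → Matrix (Fin m) (Fin m) ℝ by B⁽ᵏ⁾ = (A⁽ᵏ⁾).submatrix e e (restriction of every slice to the rows and columns selected by e). Then B is a symmetric tensor and bcirc(B) is positive semidefinite. -/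
open Matrix

theorem bcirc_submatrix {m m' n n' l : ℕ} (A : Fin l → Matrix (Fin m') (Fin n') ℝ)
    (e : Fin m → Fin m') (f : Fin n → Fin n') :
    bcirc (fun k => (A k).submatrix e f) =
      (bcirc A).submatrix (Prod.map id e) (Prod.map id f) :=
  rfl

theorem principal_subtensor_tpsd_general
    (m m' l : ℕ) (A : Fin l → Matrix (Fin m') (Fin m') ℝ)
    (hsymm : ∀ k : Fin l, (A k)ᵀ = A (-k))
    (hpsd : (bcirc A).PosSemidef)
    (e : Fin m → Fin m') :
    (∀ k : Fin l, ((fun k' => (A k').submatrix e e) k)ᵀ =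
        (fun k' => (A k').submatrix e e) (-k)) ∧
    (bcirc (fun k' => (A k').submatrix e e)).PosSemidef :=
  ⟨fun k => by rw [transpose_submatrix, hsymm], bcirc_submatrix A e e ▸ hpsd.submatrix _⟩

/-- a principal subtensor of a T-positive semidefinite tensor is
T-positive semidefinite. -/
theorem principal_subtensor_tpsd
    (m m' l : ℕ) (A : Fin l → Matrix (Fin m') (Fin m') ℝ)
    (hsymm : ∀ k : Fin l, (A k)ᵀ = A (-k))
    (hpsd : (bcirc A).PosSemidef)
    (e : Fin m → Fin m') (he : Function.Injective e) :
    (∀ k : Fin l, ((fun k' => (A k').submatrix e e) k)ᵀ =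
        (fun k' => (A k').submatrix e e) (-k)) ∧
    (bcirc (fun k' => (A k').submatrix e e)).PosSemidef :=
  principal_subtensor_tpsd_general m m' l A hsymm hpsd e
end

section
/- Reduction of the complex SDP by conjugate symmetry (even case): let l be an even positive integer and C, X : Fin l → Matrix (Fin m) (Fin m) ℂ be families of Hermitian matrices satisfying C_k = conj(C_{l−k}) and X_k = conj(X_{l−k}) for every k ∈ Fin l (indices mod l, conj entrywise). Then each inner product ⟨C_k, X_k⟩ := trace(C_k^H · X_k) is a real number, and Σ_{k=0}^{l−1} ⟨C_k, X_k⟩ = ⟨C_0, X_0⟩ + ⟨C_{l/2}, X_{l/2}⟩ + 2 · Σ_{k=1}^{l/2−1} ⟨C_k, X_k⟩. -/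
/-!
For Hermitian `A`, `B` the conjugate of `trace (Aᴴ * B)` is `trace (Bᴴ * A) = trace (B * A)`, so the
inner product is real; conjugating both matrices entrywise conjugates it. Hence the summand is
invariant under `k ↦ -k`, and in the sum over `Fin l` each `k` pairs with `l - k`, except for the
two fixed points `0` and `l / 2`.
-/

open Matrix Finset

section TraceConj

variable {R n : Type*} [CommSemiring R] [StarRing R] [Fintype n]

theorem Matrix.star_trace_conjTranspose_mul (A B : Matrix n n R) :
    star (trace (Aᴴ * B)) = trace (Bᴴ * A) := by
  rw [← trace_conjTranspose, conjTranspose_mul, conjTranspose_conjTranspose]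

theorem Matrix.IsHermitian.star_trace_conjTranspose_mul {A B : Matrix n n R}
    (hA : A.IsHermitian) (hB : B.IsHermitian) :
    star (trace (Aᴴ * B)) = trace (Aᴴ * B) := by
  rw [Matrix.star_trace_conjTranspose_mul, hA.eq, hB.eq, trace_mul_comm]

theorem Matrix.trace_conjTranspose_map_star_mul_map_star (A B : Matrix n n R) :
    trace ((A.map (starRingEnd R))ᴴ * B.map (starRingEnd R)) = star (trace (Aᴴ * B)) := by
  rw [← conjTranspose_map (starRingEnd R) fun _ => rfl, ← Matrix.map_mul, ← AddMonoidHom.map_trace]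
  rfl

end TraceConj

theorem Fin.val_neg_of_pos {l : ℕ} {k : Fin l} (hk : 0 < (k : ℕ)) :
    ((-k : Fin l) : ℕ) = l - k := by
  rw [Fin.val_neg']
  exact Nat.mod_eq_of_lt (by omega)

theorem Fin.sum_univ_of_apply_neg_eq_of_even {M : Type*} [AddCommMonoid M] {l : ℕ}
    (hl : 0 < l) (hev : 2 ∣ l) {f : Fin l → M} (hf : ∀ k, f (-k) = f k) :
    ∑ k, f k = f ⟨0, hl⟩ + f ⟨l / 2, Nat.div_lt_self hl one_lt_two⟩ +
      2 • ∑ k ∈ univ.filter (fun k : Fin l => 0 < (k : ℕ) ∧ (k : ℕ) < l / 2), f k := by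
  obtain ⟨h, rfl⟩ := hev
  set A := univ.filter (fun k : Fin (2 * h) => 0 < (k : ℕ) ∧ (k : ℕ) < 2 * h / 2)
  have hlow : univ.filter (fun k : Fin (2 * h) => (k : ℕ) ≤ 2 * h / 2) =
      insert ⟨0, hl⟩ (insert ⟨2 * h / 2, Nat.div_lt_self hl one_lt_two⟩ A) := by
    ext k
    simp only [A, mem_filter, mem_univ, true_and, mem_insert, Fin.ext_iff]
    omega
  have hhigh : ∑ k ∈ univ.filter (fun k : Fin (2 * h) => ¬ (k : ℕ) ≤ 2 * h / 2), f k =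
      ∑ k ∈ A, f k := by
    refine sum_nbij' (- ·) (- ·) ?_ ?_ (fun k _ => neg_neg k) (fun k _ => neg_neg k)
      (fun k _ => (hf k).symm)
    all_goals
      intro k hk
      simp only [A, mem_filter, mem_univ, true_and] at hk ⊢
      rw [Fin.val_neg_of_pos (by omega)]
      omega
  rw [← sum_filter_add_sum_filter_not univ (fun k : Fin (2 * h) => (k : ℕ) ≤ 2 * h / 2),
    hlow, hhigh, sum_insert, sum_insert, two_nsmul]
  · abel
  · simp [A]
  · simp [A, Fin.ext_iff]
    omega

/-- reduction of the complex SDP by conjugate symmetry (even case): if the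
Hermitian families `C`, `X` satisfy `C_k = conj(C_{l−k})` and `X_k = conj(X_{l−k})`, then
each `⟨C_k, X_k⟩ = trace(C_kᴴ X_k)` is real and
`Σ_k ⟨C_k, X_k⟩ = ⟨C_0, X_0⟩ + ⟨C_{l/2}, X_{l/2}⟩ + 2 Σ_{0<k<l/2} ⟨C_k, X_k⟩`. -/
theorem complex_sdp_conjugate_symmetry_reduction_even
    (m l : ℕ) (hl : 0 < l) (hev : 2 ∣ l)
    (C X : Fin l → Matrix (Fin m) (Fin m) ℂ)
    (hCherm : ∀ k : Fin l, (C k).IsHermitian)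
    (hXherm : ∀ k : Fin l, (X k).IsHermitian)
    (hCconj : ∀ k : Fin l, C k = (C (-k)).map (starRingEnd ℂ))
    (hXconj : ∀ k : Fin l, X k = (X (-k)).map (starRingEnd ℂ)) :
    (∀ k : Fin l, (Matrix.trace ((C k)ᴴ * X k)).im = 0) ∧
    ∑ k : Fin l, Matrix.trace ((C k)ᴴ * X k) =
      Matrix.trace ((C ⟨0, hl⟩)ᴴ * X ⟨0, hl⟩) +
        Matrix.trace ((C ⟨l / 2, Nat.div_lt_self hl one_lt_two⟩)ᴴ *
          X ⟨l / 2, Nat.div_lt_self hl one_lt_two⟩) +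
        2 * ∑ k ∈ Finset.univ.filter (fun k : Fin l => 0 < (k : ℕ) ∧ (k : ℕ) < l / 2),
              Matrix.trace ((C k)ᴴ * X k) := by
  have hreal (k : Fin l) : star (trace ((C k)ᴴ * X k)) = trace ((C k)ᴴ * X k) :=
    (hCherm k).star_trace_conjTranspose_mul (hXherm k)
  have hsymm (k : Fin l) : trace ((C (-k))ᴴ * X (-k)) = trace ((C k)ᴴ * X k) := by
    rw [hCconj k, hXconj k, trace_conjTranspose_map_star_mul_map_star, hreal]
  refine ⟨fun k => Complex.conj_eq_iff_im.mp (hreal k), ?_⟩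
  rw [Fin.sum_univ_of_apply_neg_eq_of_even hl hev hsymm, nsmul_eq_mul, Nat.cast_ofNat]
end
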